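/- arXiv:2109.11419 — 2 statements merged into one kernel-verified Lean document; each statement's English description precedes it below -/
import Mathlib

section
/- Let 𝖢 = Σ_{c=1}^C 𝔠^c_c and 𝖡 = Σ_β 𝔟^β_β (sum over all cocolors β). Then: (a) [𝖢, 𝔠^{c₁}_{c₂}] = 0 for all colors c₁, c₂; (b) [𝖡, 𝔟^{β₁}_{β₂}] = 0 for all cocolors β₁, β₂; (c) [𝖢, 𝔞^β_c] = −𝔞^β_c and [𝖡, 𝔞^β_c] = 𝔞^β_c for every cocolor β and color c; (d) 𝖢 + 𝖡 equals the N×N identity matrix, both 𝖢 and 𝖡 lie in net_{C,N}, and the identity matrix lies in the center of the Lie algebra net_{C,N}, i.e. [𝖢 + 𝖡, x] = 0 for all x ∈ net_{C,N}. -/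
open Matrix BigOperators

/-- Index type for the standard basis of `ℝ^N`, `N = n 0 + ⋯ + n (C-1)`:
pairs `(c, i)` with `c` a color and `0 ≤ i ≤ n c - 1`. -/
abbrev Idx {C : ℕ} (n : Fin C → ℕ) := Σ c : Fin C, Fin (n c)

/-- A cocolor is a pair `(k, j)` with `1 ≤ j ≤ n k - 1`. -/
abbrev Cocolor {C : ℕ} (n : Fin C → ℕ) := {p : Idx n // (p.2 : ℕ) ≠ 0}

/-- `ν(σ) = Σ_j e_{(k, σ j)} (e^{(l, j)})ᵀ`. -/
noncomputable def nu {C : ℕ} (n : Fin C → ℕ) (k l : Fin C) (σ : Fin (n l) → Fin (n k)) :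
    Matrix (Idx n) (Idx n) ℝ :=
  ∑ j : Fin (n l), Matrix.single (⟨k, σ j⟩ : Idx n) (⟨l, j⟩ : Idx n) 1

/-- The network algebra `net_{C,N}`: the `ℝ`-span of all the `ν(σ)`. -/
noncomputable def net {C : ℕ} (n : Fin C → ℕ) : Submodule ℝ (Matrix (Idx n) (Idx n) ℝ) :=
  Submodule.span ℝ {M | ∃ (k l : Fin C) (σ : Fin (n l) → Fin (n k)), M = nu n k l σ}

/-- Vectors `x^k_0 = e_{(k,0)}` and `x^k_j = e_{(k,j)} - e_{(k,0)}` for `j ≠ 0`. -/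
noncomputable def xv {C : ℕ} (n : Fin C → ℕ) (hn : ∀ c, 0 < n c) (k : Fin C)
    (j : Fin (n k)) : Idx n → ℝ :=
  if (j : ℕ) = 0 then Pi.single (⟨k, j⟩ : Idx n) 1
  else Pi.single (⟨k, j⟩ : Idx n) 1 - Pi.single (⟨k, ⟨0, hn k⟩⟩ : Idx n) 1

/-- Covectors `X^k_0 = Σ_q e^{(k,q)}` and `X^k_i = e^{(k,i)}` for `i ≠ 0`. -/
noncomputable def Xv {C : ℕ} (n : Fin C → ℕ) (k : Fin C) (i : Fin (n k)) : Idx n → ℝ :=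
  if (i : ℕ) = 0 then ∑ q : Fin (n k), Pi.single (⟨k, q⟩ : Idx n) 1
  else Pi.single (⟨k, i⟩ : Idx n) 1

/-- `𝔠^k_l = x^k_0 (X^l_0)ᵀ`. -/
noncomputable def cM {C : ℕ} (n : Fin C → ℕ) (hn : ∀ c, 0 < n c) (k l : Fin C) :
    Matrix (Idx n) (Idx n) ℝ :=
  vecMulVec (xv n hn k ⟨0, hn k⟩) (Xv n l ⟨0, hn l⟩)

/-- `𝔞^β_l = x^β (X^l_0)ᵀ` for a cocolor `β` and color `l`. -/
noncomputable def aM {C : ℕ} (n : Fin C → ℕ) (hn : ∀ c, 0 < n c) (β : Cocolor n)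
    (l : Fin C) : Matrix (Idx n) (Idx n) ℝ :=
  vecMulVec (xv n hn β.1.1 β.1.2) (Xv n l ⟨0, hn l⟩)

/-- `𝔟^β_γ = x^β (X^γ)ᵀ` for cocolors `β, γ`. -/
noncomputable def bM {C : ℕ} (n : Fin C → ℕ) (hn : ∀ c, 0 < n c) (β γ : Cocolor n) :
    Matrix (Idx n) (Idx n) ℝ :=
  vecMulVec (xv n hn β.1.1 β.1.2) (Xv n γ.1.1 γ.1.2)

/-- `𝔬^k_γ = x^k_0 (X^γ)ᵀ` for a color `k` and cocolor `γ`. -/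
noncomputable def oM {C : ℕ} (n : Fin C → ℕ) (hn : ∀ c, 0 < n c) (k : Fin C)
    (γ : Cocolor n) : Matrix (Idx n) (Idx n) ℝ :=
  vecMulVec (xv n hn k ⟨0, hn k⟩) (Xv n γ.1.1 γ.1.2)

/-- `𝖢 = Σ_c 𝔠^c_c`. -/
noncomputable def CCm {C : ℕ} (n : Fin C → ℕ) (hn : ∀ c, 0 < n c) :
    Matrix (Idx n) (Idx n) ℝ := ∑ c : Fin C, cM n hn c c

/-- `𝖡 = Σ_β 𝔟^β_β`. -/
noncomputable def BBm {C : ℕ} (n : Fin C → ℕ) (hn : ∀ c, 0 < n c) :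
    Matrix (Idx n) (Idx n) ℝ := ∑ β : Cocolor n, bM n hn β β

section Helpers
section Helpers
open Matrix BigOperators

variable {C : ℕ} {n : Fin C → ℕ} (hn : ∀ c, 0 < n c)

private lemma vmv_mul {I : Type*} [Fintype I] (w v x y : I → ℝ) :
    vecMulVec w v * vecMulVec x y = (v ⬝ᵥ x) • vecMulVec w y := by
  ext i j
  simp only [mul_apply, vecMulVec_apply, Matrix.smul_apply, smul_eq_mul, dotProduct, Finset.sum_mul]
  exact Finset.sum_congr rfl fun k _ => by ring

private lemma vmv_single (a b : Idx n) :
    vecMulVec (Pi.single a (1:ℝ)) (Pi.single b 1) = Matrix.single a b 1 := by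
  ext i j
  simp only [vecMulVec_apply, Pi.single_apply, Matrix.single, Matrix.of_apply]
  rcases eq_or_ne a i with h1 | h1
  · subst h1
    rcases eq_or_ne b j with h2 | h2
    · subst h2; simp
    · simp [h2, Ne.symm h2]
  · simp [h1, Ne.symm h1]

private lemma vmv_sum_right {I : Type*} [Fintype I] {s : Finset I} (w : Idx n → ℝ)
    (f : I → Idx n → ℝ) :
    vecMulVec w (∑ i ∈ s, f i) = ∑ i ∈ s, vecMulVec w (f i) := by
  ext a b
  simp [vecMulVec_apply, Finset.sum_apply, Matrix.sum_apply, Finset.mul_sum]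

private lemma vmv_sub_left (a b v : Idx n → ℝ) :
    vecMulVec (a - b) v = vecMulVec a v - vecMulVec b v := by
  ext i j; simp [vecMulVec_apply, sub_mul]

private lemma xv_zero_eq (k : Fin C) :
    xv n hn k ⟨0, hn k⟩ = Pi.single (⟨k, ⟨0, hn k⟩⟩ : Idx n) 1 := by simp [xv]

private lemma Xv_zero_eq (k : Fin C) :
    Xv n k ⟨0, hn k⟩ = ∑ q : Fin (n k), Pi.single (⟨k, q⟩ : Idx n) 1 := by simp [Xv]

private lemma Xv_zero_apply (l c : Fin C) (m : Fin (n c)) :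
    Xv n l ⟨0, hn l⟩ ⟨c, m⟩ = if c = l then 1 else 0 := by
  rw [Xv_zero_eq hn]
  by_cases h : c = l
  · subst h
    simp [Finset.sum_apply, Pi.single_apply, Sigma.mk.inj_iff, eq_comm]
  · simp [Finset.sum_apply, Pi.single_apply, Sigma.mk.inj_iff, h]

private lemma Xv_pos_apply (l : Fin C) (i : Fin (n l)) (hi : (i : ℕ) ≠ 0) (p : Idx n) :
    Xv n l i p = if p = ⟨l, i⟩ then 1 else 0 := by
  simp [Xv, hi, Pi.single_apply]

private lemma ne_zero_cocolor (l : Fin C) (i : Fin (n l)) (hi : (i : ℕ) ≠ 0) (k : Fin C) :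
    (⟨k, ⟨0, hn k⟩⟩ : Idx n) ≠ ⟨l, i⟩ := by
  rintro h
  obtain ⟨rfl, h2⟩ := Sigma.mk.inj_iff.mp h
  exact hi (by simpa using congrArg Fin.val (heq_iff_eq.mp h2).symm)

private lemma dot00 (l k : Fin C) :
    Xv n l ⟨0, hn l⟩ ⬝ᵥ xv n hn k ⟨0, hn k⟩ = if k = l then 1 else 0 := by
  rw [xv_zero_eq hn, dotProduct_single, Xv_zero_apply hn, mul_one]

private lemma dot0j (l k : Fin C) (j : Fin (n k)) (hj : (j : ℕ) ≠ 0) :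
    Xv n l ⟨0, hn l⟩ ⬝ᵥ xv n hn k j = 0 := by
  simp [xv, hj, dotProduct_sub, Xv_zero_apply hn]

private lemma doti0 (l : Fin C) (i : Fin (n l)) (hi : (i : ℕ) ≠ 0) (k : Fin C) :
    Xv n l i ⬝ᵥ xv n hn k ⟨0, hn k⟩ = 0 := by
  rw [xv_zero_eq hn, dotProduct_single, Xv_pos_apply l i hi,
    if_neg (ne_zero_cocolor hn l i hi k), zero_mul]

private lemma dotij (l : Fin C) (i : Fin (n l)) (hi : (i : ℕ) ≠ 0) (k : Fin C) (j : Fin (n k))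
    (hj : (j : ℕ) ≠ 0) :
    Xv n l i ⬝ᵥ xv n hn k j = if (⟨k, j⟩ : Idx n) = ⟨l, i⟩ then 1 else 0 := by
  simp only [xv, if_neg hj, dotProduct_sub, dotProduct_single, mul_one,
    Xv_pos_apply l i hi, if_neg (ne_zero_cocolor hn l i hi k), sub_zero]

private lemma dotco (γ β : Cocolor n) :
    Xv n γ.1.1 γ.1.2 ⬝ᵥ xv n hn β.1.1 β.1.2 = if β = γ then 1 else 0 := by
  rw [dotij hn _ _ γ.2 _ _ β.2]
  by_cases h : β = γ
  · simp [h, Sigma.eta]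
  · rw [if_neg, if_neg h]
    exact fun e => h (Subtype.ext (by simpa [Sigma.eta] using e))

private lemma one_eq_sum_std :
    (1 : Matrix (Idx n) (Idx n) ℝ) = ∑ p : Idx n, Matrix.single p p 1 := by
  ext a b
  simp only [Matrix.sum_apply, Matrix.single, Matrix.of_apply, Matrix.one_apply]
  by_cases h : a = b
  · subst h; simp [Finset.sum_ite_eq]
  · have hx : ∀ x : Idx n, ¬(a = x ∧ b = x) := fun x ⟨h1, h2⟩ => h (h1.trans h2.symm)
    have hx' : ∀ x : Idx n, ¬(x = a ∧ x = b) := fun x ⟨h1, h2⟩ => h (h1.symm.trans h2)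
    simp [h, hx, hx']

private lemma telescope {M : Type*} [AddCommGroup M] {m : ℕ} (f g : Fin m → M) (z : Fin m)
    (hz : f z = g z) :
    ∑ j, (if j = z then ∑ q, g q else f j - g j) = ∑ j, f j := by
  have h1 : ∀ j, (if j = z then ∑ q, g q else f j - g j)
      = (f j - g j) + (if j = z then (∑ q, g q) - (f z - g z) else 0) := by
    intro j
    by_cases h : j = z
    · subst h; simp
    · simp [h]
  simp only [h1, Finset.sum_add_distrib, Finset.sum_ite_eq', Finset.mem_univ, if_true, hz,
    sub_self, sub_zero, Finset.sum_sub_distrib]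
  abel

private lemma block_sum (k : Fin C) :
    ∑ j : Fin (n k), vecMulVec (xv n hn k j) (Xv n k j)
      = ∑ j : Fin (n k), Matrix.single (⟨k, j⟩ : Idx n) (⟨k, j⟩ : Idx n) 1 := by
  have key : ∀ j : Fin (n k), vecMulVec (xv n hn k j) (Xv n k j)
      = if j = ⟨0, hn k⟩
        then ∑ q : Fin (n k),
          Matrix.single (⟨k, ⟨0, hn k⟩⟩ : Idx n) (⟨k, q⟩ : Idx n) 1
        else Matrix.single (⟨k, j⟩ : Idx n) (⟨k, j⟩ : Idx n) 1
          - Matrix.single (⟨k, ⟨0, hn k⟩⟩ : Idx n) (⟨k, j⟩ : Idx n) 1 := by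
    intro j
    by_cases h : (j : ℕ) = 0
    · have hj : j = ⟨0, hn k⟩ := Fin.ext h
      subst hj
      rw [if_pos rfl, xv_zero_eq hn, Xv_zero_eq hn, vmv_sum_right]
      exact Finset.sum_congr rfl fun q _ => vmv_single _ _
    · have hj : j ≠ ⟨0, hn k⟩ := fun e => h (by rw [e])
      rw [if_neg hj]
      simp only [xv, Xv, if_neg h]
      rw [vmv_sub_left, vmv_single, vmv_single]
  simp only [key]
  exact telescope _ _ _ rfl

end Helpers


section MainProof
open Matrix BigOperators
variable {C : ℕ} {n : Fin C → ℕ} (hn : ∀ c, 0 < n c)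

private lemma sum_idx {M : Type*} [AddCommMonoid M] (f : Idx n → M) :
    ∑ p : Idx n, f p = ∑ k : Fin C, ∑ j : Fin (n k), f ⟨k, j⟩ := by
  rw [← Finset.univ_sigma_univ, Finset.sum_sigma]

private lemma nu_zero_eq_cM (k : Fin C) :
    nu n k k (fun _ => ⟨0, hn k⟩) = cM n hn k k := by
  rw [nu, cM, xv_zero_eq hn, Xv_zero_eq hn, vmv_sum_right]
  exact Finset.sum_congr rfl fun q _ => (vmv_single _ _).symm

private lemma id_split :
    CCm n hn + BBm n hn = ∑ p : Idx n, vecMulVec (xv n hn p.1 p.2) (Xv n p.1 p.2) := by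
  classical
  set F : Idx n → Matrix (Idx n) (Idx n) ℝ :=
    fun p => vecMulVec (xv n hn p.1 p.2) (Xv n p.1 p.2) with hF
  have hB : BBm n hn = ∑ p ∈ Finset.univ.filter (fun p : Idx n => (p.2 : ℕ) ≠ 0), F p := by
    rw [BBm]
    exact Eq.symm (Finset.sum_subtype _ (fun x => by simp [Finset.mem_filter]) F)
  have hC : CCm n hn
      = ∑ p ∈ Finset.univ.filter (fun p : Idx n => ¬ (p.2 : ℕ) ≠ 0), F p := by
    rw [Finset.sum_filter, sum_idx (fun p : Idx n => if ¬ (p.2 : ℕ) ≠ 0 then F p else 0), CCm]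
    refine Finset.sum_congr rfl fun k _ => ?_
    have hcond : ∀ j : Fin (n k), (¬ ((⟨k, j⟩ : Idx n).2 : ℕ) ≠ 0) = (j = ⟨0, hn k⟩) := by
      intro j
      simp [Fin.ext_iff]
    simp only [hcond]
    rw [Finset.sum_ite_eq', if_pos (Finset.mem_univ _)]
    rfl
  rw [hB, hC, add_comm, Finset.sum_filter_add_sum_filter_not]

private lemma id_sum :
    ∑ p : Idx n, vecMulVec (xv n hn p.1 p.2) (Xv n p.1 p.2)
      = (1 : Matrix (Idx n) (Idx n) ℝ) := by
  rw [one_eq_sum_std, sum_idx (fun p : Idx n => vecMulVec (xv n hn p.1 p.2) (Xv n p.1 p.2)),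
    sum_idx (fun p : Idx n => Matrix.single p p 1)]
  exact Finset.sum_congr rfl fun k _ => block_sum hn k

end MainProof

/-- `𝖢` commutes with the `𝔠`'s, `𝖡` with the `𝔟`'s, `[𝖢,𝔞] = -𝔞`, `[𝖡,𝔞] = 𝔞`,
`𝖢 + 𝖡 = Id`, `𝖢, 𝖡 ∈ net_{C,N}` and the identity is central in `net_{C,N}`. -/
theorem stmt13 {C : ℕ} (hC : 0 < C) (n : Fin C → ℕ) (hn : ∀ c, 0 < n c) :
    (∀ c₁ c₂ : Fin C,
      CCm n hn * cM n hn c₁ c₂ - cM n hn c₁ c₂ * CCm n hn = 0) ∧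
    (∀ β₁ β₂ : Cocolor n,
      BBm n hn * bM n hn β₁ β₂ - bM n hn β₁ β₂ * BBm n hn = 0) ∧
    (∀ (β : Cocolor n) (c : Fin C),
      CCm n hn * aM n hn β c - aM n hn β c * CCm n hn = -aM n hn β c ∧
      BBm n hn * aM n hn β c - aM n hn β c * BBm n hn = aM n hn β c) ∧
    (CCm n hn + BBm n hn = 1 ∧ CCm n hn ∈ net n ∧ BBm n hn ∈ net n ∧
      ∀ x ∈ net n, (CCm n hn + BBm n hn) * x - x * (CCm n hn + BBm n hn) = 0) := by
  classical
  have hid : CCm n hn + BBm n hn = 1 := (id_split hn).trans (id_sum hn)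
  refine ⟨?_, ?_, ?_, ?_, ?_, ?_, ?_⟩
  · -- (a)
    intro c₁ c₂
    have hcc : ∀ k l k' l' : Fin C,
        cM n hn k l * cM n hn k' l' = (if k' = l then (1:ℝ) else 0) • cM n hn k l' := by
      intro k l k' l'
      rw [cM, cM, vmv_mul, dot00 hn]
      rfl
    rw [CCm, Finset.sum_mul, Finset.mul_sum]
    simp only [hcc, ite_smul, one_smul, zero_smul, Finset.sum_ite_eq, Finset.sum_ite_eq',
      Finset.mem_univ, if_true, sub_self]
  · -- (b)
    intro β₁ β₂
    have hbb : ∀ β γ β' γ' : Cocolor n,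
        bM n hn β γ * bM n hn β' γ' = (if β' = γ then (1:ℝ) else 0) • bM n hn β γ' := by
      intro β γ β' γ'
      rw [bM, bM, vmv_mul, dotco hn]
      rfl
    rw [BBm, Finset.sum_mul, Finset.mul_sum]
    simp only [hbb, ite_smul, one_smul, zero_smul, Finset.sum_ite_eq, Finset.sum_ite_eq',
      Finset.mem_univ, if_true, sub_self]
  · -- (c)
    intro β c
    have hca : ∀ k : Fin C, cM n hn k k * aM n hn β c = 0 := by
      intro k
      rw [cM, aM, vmv_mul, dot0j hn k β.1.1 β.1.2 β.2, zero_smul]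
    have hac : ∀ k : Fin C,
        aM n hn β c * cM n hn k k = (if k = c then (1:ℝ) else 0) • aM n hn β k := by
      intro k
      rw [aM, cM, vmv_mul, dot00 hn]
      rfl
    have hba : ∀ γ : Cocolor n,
        bM n hn γ γ * aM n hn β c = (if β = γ then (1:ℝ) else 0) • aM n hn γ c := by
      intro γ
      rw [bM, aM, vmv_mul, dotco hn]
      rfl
    have hab : ∀ γ : Cocolor n, aM n hn β c * bM n hn γ γ = 0 := by
      intro γ
      rw [aM, bM, vmv_mul, dot0j hn c γ.1.1 γ.1.2 γ.2, zero_smul]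
    constructor
    · rw [CCm, Finset.sum_mul, Finset.mul_sum]
      simp only [hca, hac, ite_smul, one_smul, zero_smul, Finset.sum_const_zero,
        Finset.sum_ite_eq, Finset.sum_ite_eq', Finset.mem_univ, if_true, zero_sub]
    · rw [BBm, Finset.sum_mul, Finset.mul_sum]
      simp only [hba, hab, ite_smul, one_smul, zero_smul, Finset.sum_const_zero,
        Finset.sum_ite_eq, Finset.sum_ite_eq', Finset.mem_univ, if_true, sub_zero]
  · -- C + B = 1
    exact hid
  · -- C ∈ net
    rw [CCm]
    exact Submodule.sum_mem _ fun k _ =>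
      Submodule.subset_span ⟨k, k, fun _ => ⟨0, hn k⟩, (nu_zero_eq_cM hn k).symm⟩
  · -- B ∈ net
    have hOne : (1 : Matrix (Idx n) (Idx n) ℝ) ∈ net n := by
      have h1 : (1 : Matrix (Idx n) (Idx n) ℝ) = ∑ k : Fin C, nu n k k (fun j => j) := by
        rw [one_eq_sum_std, sum_idx (fun p : Idx n => Matrix.single p p 1)]
        exact Finset.sum_congr rfl fun k _ => rfl
      rw [h1]
      exact Submodule.sum_mem _ fun k _ =>
        Submodule.subset_span ⟨k, k, fun j => j, rfl⟩
    have hBB : BBm n hn = 1 - CCm n hn := by rw [← hid]; abel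
    rw [hBB]
    refine Submodule.sub_mem _ hOne ?_
    rw [CCm]
    exact Submodule.sum_mem _ fun k _ =>
      Submodule.subset_span ⟨k, k, fun _ => ⟨0, hn k⟩, (nu_zero_eq_cM hn k).symm⟩
  · -- centrality
    intro x hx
    rw [hid, one_mul, mul_one, sub_self]
end Helpers
end

section
/- Let (C, n) and (C', n') be two color data with cell counts n_1,…,n_C ≥ 1 and n'_1,…,n'_{C'} ≥ 1 satisfying n_1+⋯+n_C = n'_1+⋯+n'_{C'} = N. If min(C, N−C) = min(C', N−C'), then the network Lie algebras net_{C,N} (built from (C,n)) and net_{C',N} (built from (C',n')) are isomorphic as Lie algebras over ℝ. In particular, for 1 ≤ C ≤ N−1 and B = N−C, for any cell counts n'_1,…,n'_B ≥ 1 with n'_1+⋯+n'_B = N, there is an (involution-induced) Lie algebra isomorphism net_{C,N} ≅ net_{B,N}. -/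
open Matrix BigOperators

section Core
variable {C : ℕ} (n : Fin C → ℕ) (hn : ∀ c, 0 < n c)

lemma idx_mk_eq {k l : Fin C} {i : Fin (n k)} {j : Fin (n l)} :
    (⟨k,i⟩ : Idx n) = ⟨l,j⟩ ↔ k = l ∧ (i:ℕ) = (j:ℕ) := by
  constructor
  · rintro h; cases h; exact ⟨rfl, rfl⟩
  · rintro ⟨rfl, h⟩; exact congrArg _ (Fin.ext h)

lemma sum_single_eval (k : Fin C) (p : Idx n) :
    ∑ q : Fin (n k), (Pi.single (⟨k,q⟩ : Idx n) (1:ℝ) : Idx n → ℝ) p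
      = if p.1 = k then 1 else 0 := by
  obtain ⟨l, j⟩ := p
  simp only [Pi.single_apply, idx_mk_eq]
  by_cases h : l = k
  · subst h
    simp [Fin.val_inj, Finset.filter_eq]
  · simp [h, Ne.symm h]

noncomputable def Pm : Matrix (Idx n) (Idx n) ℝ := Matrix.of fun p q => xv n hn q.1 q.2 p
noncomputable def Qm : Matrix (Idx n) (Idx n) ℝ := Matrix.of fun p q => Xv n p.1 p.2 q

lemma dotXx (k : Fin C) (i : Fin (n k)) (l : Fin C) (j : Fin (n l)) :
    Xv n k i ⬝ᵥ xv n hn l j = if (⟨k,i⟩ : Idx n) = ⟨l,j⟩ then 1 else 0 := by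
  unfold Xv xv
  have key : ∀ (m : ℕ) (a : Fin m), ∑ x : Fin m, (if (a:ℕ) = (x:ℕ) then (1:ℝ) else 0) = 1 := by
    intro m a; simp [Fin.val_inj]
  have hi' : ∀ (h : ¬ (i:ℕ) = 0), (0:ℕ) ≠ (i:ℕ) := fun h h2 => h h2.symm
  have hj' : ∀ (h : ¬ (j:ℕ) = 0), (0:ℕ) ≠ (j:ℕ) := fun h h2 => h h2.symm
  by_cases hi : (i : ℕ) = 0 <;> by_cases hj : (j : ℕ) = 0 <;>
    simp only [hi, hj, if_true, if_false, dotProduct_sub, dotProduct_single,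
      Finset.sum_apply, Pi.single_apply, idx_mk_eq]
  · rcases eq_or_ne l k with rfl | h
    · have := key (n l) ⟨0, hn l⟩
      simp only [Fin.val_mk] at this
      simpa using this
    · simp [h, Ne.symm h]
  · rcases eq_or_ne l k with rfl | h
    · have h1 := key (n l) j
      have h2 := key (n l) ⟨0, hn l⟩
      simp only [Fin.val_mk] at h2
      simp [h1, h2, hj' hj]
    · simp [h, Ne.symm h]
  · simp [hi' hi]
  · rcases eq_or_ne l k with rfl | h
    · simp [hi' hi, eq_comm]
    · simp [h, Ne.symm h]

end Core
section Core2
variable {C : ℕ} (n : Fin C → ℕ) (hn : ∀ c, 0 < n c)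

lemma key_sum (m : ℕ) (a : Fin m) :
    ∑ x : Fin m, (if (a:ℕ) = (x:ℕ) then (1:ℝ) else 0) = 1 := by simp [Fin.val_inj]

lemma key_sum' (m : ℕ) (a : Fin m) :
    ∑ x : Fin m, (if (x:ℕ) = (a:ℕ) then (1:ℝ) else 0) = 1 := by simp [Fin.val_inj]

lemma QP_eq : Qm n * Pm n hn = 1 := by
  ext p q
  have := dotXx n hn p.1 p.2 q.1 q.2
  simpa [Matrix.mul_apply, Qm, Pm, dotProduct, Matrix.one_apply] using this

lemma PQ_eq : Pm n hn * Qm n = 1 := mul_eq_one_comm.mp (QP_eq n hn)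

lemma sandwich (A B : Matrix (Idx n) (Idx n) ℝ) (a b p q : Idx n) :
    (A * Matrix.single a b (1:ℝ) * B) p q = A p a * B b q := by
  simp [Matrix.mul_apply, Matrix.single, ite_and, Finset.sum_ite_eq, Finset.mul_sum,
    Finset.sum_mul, mul_ite, ite_mul]

end Core2
section Core3
variable {C : ℕ} (n : Fin C → ℕ) (hn : ∀ c, 0 < n c)

lemma QnuP_entry (k l : Fin C) (σ : Fin (n l) → Fin (n k)) (p q : Idx n) :
    (Qm n * nu n k l σ * Pm n hn) p q
      = ∑ j : Fin (n l), Xv n p.1 p.2 ⟨k, σ j⟩ * xv n hn q.1 q.2 ⟨l, j⟩ := by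
  have h : Qm n * nu n k l σ * Pm n hn
      = ∑ j : Fin (n l),
          Qm n * Matrix.single (⟨k, σ j⟩ : Idx n) (⟨l, j⟩ : Idx n) (1:ℝ) * Pm n hn := by
    unfold nu; rw [Finset.mul_sum, Finset.sum_mul]
  rw [h, Matrix.sum_apply]
  refine Finset.sum_congr rfl fun j _ => ?_
  rw [sandwich]
  rfl

lemma Xv_color_eval (p : Idx n) (hp : (p.2:ℕ) = 0) (r : Idx n) :
    Xv n p.1 p.2 r = if r.1 = p.1 then 1 else 0 := by
  obtain ⟨k, i⟩ := p
  unfold Xv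
  rw [if_pos hp]
  have := sum_single_eval n k r
  simpa [Finset.sum_apply] using this

lemma sum_xv (l : Fin C) (q : Idx n) (hq : (q.2:ℕ) ≠ 0) :
    ∑ j : Fin (n l), xv n hn q.1 q.2 ⟨l, j⟩ = 0 := by
  obtain ⟨m, i⟩ := q
  unfold xv
  rw [if_neg hq]
  simp only [Pi.sub_apply, Pi.single_apply, idx_mk_eq, Finset.sum_sub_distrib]
  rcases eq_or_ne l m with rfl | h
  · have h1 := key_sum' (n l) i
    have h2 := key_sum' (n l) ⟨0, hn l⟩
    simp only [Fin.val_mk] at h2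
    simp [h1, h2]
  · simp [h]

lemma QnuP_forbidden (k l : Fin C) (σ : Fin (n l) → Fin (n k)) (p q : Idx n)
    (hp : (p.2:ℕ) = 0) (hq : (q.2:ℕ) ≠ 0) :
    (Qm n * nu n k l σ * Pm n hn) p q = 0 := by
  rw [QnuP_entry]
  have h1 : ∀ j : Fin (n l), Xv n p.1 p.2 (⟨k, σ j⟩ : Idx n) = if k = p.1 then 1 else 0 :=
    fun j => Xv_color_eval n p hp _
  calc ∑ j : Fin (n l), Xv n p.1 p.2 (⟨k, σ j⟩ : Idx n) * xv n hn q.1 q.2 ⟨l, j⟩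
      = (if k = p.1 then 1 else 0) * ∑ j : Fin (n l), xv n hn q.1 q.2 ⟨l, j⟩ := by
        rw [Finset.mul_sum]; exact Finset.sum_congr rfl fun j _ => by rw [h1 j]
    _ = 0 := by rw [sum_xv n hn l q hq, mul_zero]

end Core3
section Core4
variable {C : ℕ} (n : Fin C → ℕ) (hn : ∀ c, 0 < n c)

lemma sum_mk_eq (l : Fin C) (b : Idx n) :
    ∑ j : Fin (n l), (if b = (⟨l,j⟩ : Idx n) then (1:ℝ) else 0) = if b.1 = l then 1 else 0 := by
  simpa [Pi.single_apply] using sum_single_eval n l b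

lemma nu_const (k l : Fin C) (i : Fin (n k)) :
    nu n k l (fun _ => i)
      = vecMulVec (Pi.single (⟨k,i⟩ : Idx n) 1) (Xv n l ⟨0, hn l⟩) := by
  ext a b
  unfold nu
  rw [Matrix.sum_apply, vecMulVec_apply, Xv_color_eval n ⟨l, ⟨0, hn l⟩⟩ rfl b]
  simp only [Matrix.single, Matrix.of_apply, Pi.single_apply]
  by_cases ha : (⟨k,i⟩ : Idx n) = a
  · simp only [ha, true_and, if_true, one_mul]
    simpa [eq_comm] using sum_mk_eq n l b
  · have ha' : ¬ a = (⟨k,i⟩ : Idx n) := fun h => ha h.symm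
    simp [ha, ha']

lemma vecMulVec_sub_left (u v w : Idx n → ℝ) :
    vecMulVec (u - v) w = vecMulVec u w - vecMulVec v w := by
  ext a b; simp [vecMulVec_apply, sub_mul]

lemma nu_b (k l : Fin C) (i : Fin (n k)) (j : Fin (n l)) (hi : (i:ℕ) ≠ 0) (hj : (j:ℕ) ≠ 0) :
    vecMulVec (xv n hn k i) (Xv n l j)
      = nu n k l (fun j₀ => if j₀ = j then i else ⟨0, hn k⟩)
        - nu n k l (fun _ => ⟨0, hn k⟩) := by
  ext a b
  unfold nu xv Xv
  rw [Matrix.sub_apply, Matrix.sum_apply, Matrix.sum_apply, ← Finset.sum_sub_distrib,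
    vecMulVec_apply, if_neg hi, if_neg hj]
  rw [Finset.sum_eq_single j]
  · simp only [if_pos rfl, Matrix.single, Matrix.of_apply, Pi.sub_apply,
      Pi.single_apply, ite_and, sub_mul]
    by_cases hb : (⟨l,j⟩ : Idx n) = b <;> by_cases ha1 : (⟨k,i⟩ : Idx n) = a <;>
      by_cases ha0 : (⟨k,⟨0,hn k⟩⟩ : Idx n) = a <;>
      simp_all [eq_comm]
  · intro j₀ _ hj₀
    simp [if_neg hj₀]
  · simp

lemma mem_nu (k l : Fin C) (σ : Fin (n l) → Fin (n k)) : nu n k l σ ∈ net n :=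
  Submodule.subset_span ⟨k, l, σ, rfl⟩

lemma vmv_mem (p q : Idx n) (hallow : (p.2:ℕ) ≠ 0 ∨ (q.2:ℕ) = 0) :
    vecMulVec (xv n hn p.1 p.2) (Xv n q.1 q.2) ∈ net n := by
  obtain ⟨k, i⟩ := p
  obtain ⟨l, j⟩ := q
  by_cases hq : (j:ℕ) = 0
  · have hXv : Xv n l j = Xv n l ⟨0, hn l⟩ := by
      unfold Xv; rw [if_pos hq, if_pos rfl]
    rw [hXv]
    by_cases hi : (i:ℕ) = 0
    · have hxv : xv n hn k i = Pi.single (⟨k,i⟩ : Idx n) 1 := by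
        unfold xv; rw [if_pos hi]
      rw [hxv, ← nu_const]
      exact mem_nu n k l _
    · have hxv : xv n hn k i
          = Pi.single (⟨k,i⟩ : Idx n) 1 - Pi.single (⟨k,⟨0, hn k⟩⟩ : Idx n) 1 := by
        unfold xv; rw [if_neg hi]
      rw [hxv, vecMulVec_sub_left, ← nu_const, ← nu_const]
      exact sub_mem (mem_nu n k l _) (mem_nu n k l _)
  · have hi : (i:ℕ) ≠ 0 := by
      rcases hallow with h | h
      · exact h
      · exact absurd h hq
    rw [nu_b n hn k l i j hi hq]
    exact sub_mem (mem_nu n k l _) (mem_nu n k l _)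

end Core4
section Core5
variable {C : ℕ} (n : Fin C → ℕ) (hn : ∀ c, 0 < n c)

lemma PEQ (p q : Idx n) :
    Pm n hn * Matrix.single p q (1:ℝ) * Qm n
      = vecMulVec (xv n hn p.1 p.2) (Xv n q.1 q.2) := by
  ext a b; rw [sandwich, vecMulVec_apply]; rfl

lemma net_iff (M : Matrix (Idx n) (Idx n) ℝ) :
    M ∈ net n ↔ ∀ p q : Idx n, (p.2:ℕ) = 0 → (q.2:ℕ) ≠ 0
      → (Qm n * M * Pm n hn) p q = 0 := by
  constructor
  · intro hM
    let T : Submodule ℝ (Matrix (Idx n) (Idx n) ℝ) :=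
      { carrier := {M | ∀ p q : Idx n, (p.2:ℕ) = 0 → (q.2:ℕ) ≠ 0
          → (Qm n * M * Pm n hn) p q = 0}
        add_mem' := by
          intro a b ha hb p q hp hq
          rw [Matrix.mul_add, Matrix.add_mul, Matrix.add_apply, ha p q hp hq,
            hb p q hp hq, add_zero]
        zero_mem' := by intro p q hp hq; simp
        smul_mem' := by
          intro c a ha p q hp hq
          rw [Matrix.mul_smul, Matrix.smul_mul, Matrix.smul_apply, ha p q hp hq, smul_zero] }
    have hle : net n ≤ T := by
      rw [net, Submodule.span_le]
      rintro _ ⟨k, l, σ, rfl⟩ p q hp hq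
      exact QnuP_forbidden n hn k l σ p q hp hq
    exact hle hM
  · intro h
    have hM : M = Pm n hn * (Qm n * M * Pm n hn) * Qm n := by
      have h2 : Pm n hn * (Qm n * M * Pm n hn) * Qm n
          = (Pm n hn * Qm n) * M * (Pm n hn * Qm n) := by
        simp only [Matrix.mul_assoc]
      rw [h2, PQ_eq, one_mul, mul_one]
    set m := Qm n * M * Pm n hn with hm
    have hrep : M = ∑ p : Idx n, ∑ q : Idx n, m p q • (Pm n hn * Matrix.single p q (1:ℝ) * Qm n) := by
      conv_lhs => rw [hM, Matrix.matrix_eq_sum_single m]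
      rw [Finset.mul_sum, Finset.sum_mul]
      refine Finset.sum_congr rfl fun p _ => ?_
      rw [Finset.mul_sum, Finset.sum_mul]
      refine Finset.sum_congr rfl fun q _ => ?_
      have : Matrix.single p q (m p q) = m p q • Matrix.single p q (1:ℝ) := by
        rw [Matrix.smul_single, smul_eq_mul, mul_one]
      rw [this, Matrix.mul_smul, Matrix.smul_mul]
    rw [hrep]
    refine Submodule.sum_mem _ fun p _ => Submodule.sum_mem _ fun q _ => ?_
    by_cases hpq : (p.2:ℕ) = 0 ∧ (q.2:ℕ) ≠ 0
    · rw [h p q hpq.1 hpq.2, zero_smul]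
      exact Submodule.zero_mem _
    · refine Submodule.smul_mem _ _ ?_
      rw [PEQ]
      refine vmv_mem n hn p q ?_
      by_cases hp : (p.2:ℕ) = 0
      · right; by_contra hq; exact hpq ⟨hp, hq⟩
      · left; exact hp

end Core5
section Core6
variable {C : ℕ} (n : Fin C → ℕ) (hn : ∀ c, 0 < n c)

noncomputable def colorEquiv : {p : Idx n // (p.2:ℕ) = 0} ≃ Fin C where
  toFun x := x.1.1
  invFun c := ⟨⟨c, ⟨0, hn c⟩⟩, rfl⟩
  left_inv := by
    rintro ⟨⟨c, i⟩, h⟩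
    refine Subtype.ext ?_
    exact (idx_mk_eq n).mpr ⟨rfl, h.symm⟩
  right_inv := fun c => rfl

include hn in
lemma card_color : Fintype.card {p : Idx n // (p.2:ℕ) = 0} = C := by
  rw [Fintype.card_congr (colorEquiv n hn), Fintype.card_fin]

lemma card_idx : Fintype.card (Idx n) = ∑ c, n c := by
  simp

include hn in
lemma card_cocolor : Fintype.card {p : Idx n // ¬ ((p.2:ℕ) = 0)} = (∑ c, n c) - C := by
  rw [Fintype.card_subtype_compl, card_idx, card_color n hn]

lemma mkE {α β : Type*} (P : α → Prop) (Q : β → Prop) [DecidablePred P] [DecidablePred Q]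
    (e₁ : {a // P a} ≃ {b // Q b}) (e₂ : {a // ¬ P a} ≃ {b // ¬ Q b}) :
    ∃ e : α ≃ β, ∀ a, Q (e a) ↔ P a := by
  refine ⟨(Equiv.sumCompl P).symm.trans ((Equiv.sumCongr e₁ e₂).trans (Equiv.sumCompl Q)), ?_⟩
  intro a
  by_cases h : P a
  · rw [Equiv.trans_apply, Equiv.trans_apply, Equiv.sumCompl_symm_apply_of_pos h]
    simp only [Equiv.sumCongr_apply, Sum.map_inl, Equiv.sumCompl_apply_inl]
    exact ⟨fun _ => h, fun _ => (e₁ ⟨a, h⟩).2⟩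
  · rw [Equiv.trans_apply, Equiv.trans_apply, Equiv.sumCompl_symm_apply_of_neg h]
    simp only [Equiv.sumCongr_apply, Sum.map_inr, Equiv.sumCompl_apply_inr]
    exact ⟨fun hq => absurd hq (e₂ ⟨a, h⟩).2, fun hp => absurd hp h⟩

end Core6
section Core7
variable {C : ℕ} (n : Fin C → ℕ) (hn : ∀ c, 0 < n c)

noncomputable def conjE : Matrix (Idx n) (Idx n) ℝ ≃ₗ[ℝ] Matrix (Idx n) (Idx n) ℝ where
  toFun M := Qm n * M * Pm n hn
  invFun M := Pm n hn * M * Qm n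
  map_add' A B := by rw [Matrix.mul_add, Matrix.add_mul]
  map_smul' c A := by rw [Matrix.mul_smul, Matrix.smul_mul]; rfl
  left_inv M := by
    have h2 : Pm n hn * (Qm n * M * Pm n hn) * Qm n
        = (Pm n hn * Qm n) * M * (Pm n hn * Qm n) := by simp only [Matrix.mul_assoc]
    simp only [h2, PQ_eq, one_mul, mul_one]
  right_inv M := by
    have h2 : Qm n * (Pm n hn * M * Qm n) * Pm n hn
        = (Qm n * Pm n hn) * M * (Qm n * Pm n hn) := by simp only [Matrix.mul_assoc]
    simp only [h2, QP_eq, one_mul, mul_one]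

lemma conjE_apply (M : Matrix (Idx n) (Idx n) ℝ) :
    conjE n hn M = Qm n * M * Pm n hn := rfl

lemma conjE_mul (A B : Matrix (Idx n) (Idx n) ℝ) :
    conjE n hn (A * B) = conjE n hn A * conjE n hn B := by
  simp only [conjE_apply, ← Matrix.mul_assoc]
  rw [Matrix.mul_assoc (Qm n * A) (Pm n hn) (Qm n), PQ_eq n hn, mul_one]

lemma conjE_bracket (A B : Matrix (Idx n) (Idx n) ℝ) :
    conjE n hn (A * B - B * A)
      = conjE n hn A * conjE n hn B - conjE n hn B * conjE n hn A := by
  rw [map_sub, conjE_mul, conjE_mul]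

lemma master {C' : ℕ} (n' : Fin C' → ℕ)
    (Φ : Matrix (Idx n) (Idx n) ℝ ≃ₗ[ℝ] Matrix (Idx n') (Idx n') ℝ)
    (hmul : ∀ A B, Φ (A * B - B * A) = Φ A * Φ B - Φ B * Φ A)
    (hnet : ∀ M, M ∈ net n ↔ Φ M ∈ net n') :
    ∃ g : ↥(net n) →ₗ[ℝ] Matrix (Idx n') (Idx n') ℝ,
      Function.Injective g ∧
      (∀ M : Matrix (Idx n') (Idx n') ℝ, M ∈ net n' ↔ ∃ x, g x = M) ∧
      (∀ x y z : ↥(net n),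
        (z : Matrix (Idx n) (Idx n) ℝ)
            = (x : Matrix (Idx n) (Idx n) ℝ) * y - (y : Matrix (Idx n) (Idx n) ℝ) * x →
          g z = g x * g y - g y * g x) := by
  refine ⟨Φ.toLinearMap.comp (net n).subtype, ?_, ?_, ?_⟩
  · exact Φ.injective.comp Subtype.val_injective
  · intro M
    constructor
    · intro hM
      refine ⟨⟨Φ.symm M, (hnet _).mpr ?_⟩, ?_⟩
      · rwa [Φ.apply_symm_apply]
      · simp
    · rintro ⟨x, rfl⟩
      exact (hnet x).mp x.2
  · intro x y z hz
    simp only [LinearMap.comp_apply, Submodule.subtype_apply, LinearEquiv.coe_coe]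
    rw [hz, hmul]

end Core7
section Core8
variable {C C' : ℕ} (n : Fin C → ℕ) (hn : ∀ c, 0 < n c) (n' : Fin C' → ℕ) (hn' : ∀ c, 0 < n' c)

lemma conjE_symm_mul (A B : Matrix (Idx n) (Idx n) ℝ) :
    (conjE n hn).symm (A * B) = (conjE n hn).symm A * (conjE n hn).symm B := by
  apply (conjE n hn).injective
  rw [conjE_mul, LinearEquiv.apply_symm_apply, LinearEquiv.apply_symm_apply,
    LinearEquiv.apply_symm_apply]

include hn hn' in
lemma case_same (e : Idx n ≃ Idx n') (hE : ∀ p, (((e p).2:ℕ) = 0) ↔ ((p.2:ℕ) = 0)) :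
    ∃ g : ↥(net n) →ₗ[ℝ] Matrix (Idx n') (Idx n') ℝ,
      Function.Injective g ∧
      (∀ M : Matrix (Idx n') (Idx n') ℝ, M ∈ net n' ↔ ∃ x, g x = M) ∧
      (∀ x y z : ↥(net n),
        (z : Matrix (Idx n) (Idx n) ℝ)
            = (x : Matrix (Idx n) (Idx n) ℝ) * y - (y : Matrix (Idx n) (Idx n) ℝ) * x →
          g z = g x * g y - g y * g x) := by
  set R := Matrix.reindexLinearEquiv ℝ ℝ e e with hR
  refine master n n' ((conjE n hn).trans (R.trans (conjE n' hn').symm)) ?_ ?_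
  · intro A B
    simp only [LinearEquiv.trans_apply]
    rw [conjE_bracket, map_sub, ← Matrix.reindexLinearEquiv_mul ℝ ℝ e e e,
      ← Matrix.reindexLinearEquiv_mul ℝ ℝ e e e, map_sub, conjE_symm_mul, conjE_symm_mul]
  · intro M
    rw [net_iff n hn M, net_iff n' hn']
    have hRe : conjE n' hn' (((conjE n hn).trans (R.trans (conjE n' hn').symm)) M)
        = R (conjE n hn M) := by
      simp only [LinearEquiv.trans_apply, LinearEquiv.apply_symm_apply]
    rw [conjE_apply n' hn'] at hRe
    have hEntry : ∀ p' q', R (conjE n hn M) p' q'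
        = (conjE n hn M) (e.symm p') (e.symm q') := by
      intro p' q'
      simp [hR, Matrix.reindexLinearEquiv_apply, Matrix.reindex_apply]
    constructor
    · intro h p' q' hp hq
      rw [hRe, hEntry, conjE_apply]
      refine h _ _ ?_ ?_
      · have := hE (e.symm p'); rw [Equiv.apply_symm_apply] at this; exact this.mp hp
      · have := hE (e.symm q'); rw [Equiv.apply_symm_apply] at this
        exact fun h0 => hq (this.mpr h0)
    · intro h p q hp hq
      have h2 := h (e p) (e q) ((hE p).mpr hp) (fun h0 => hq ((hE q).mp h0))
      rw [hRe, hEntry, conjE_apply, Equiv.symm_apply_apply, Equiv.symm_apply_apply] at h2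
      exact h2

include hn hn' in
lemma case_swap (e : Idx n ≃ Idx n') (hE : ∀ p, (¬ (((e p).2:ℕ) = 0)) ↔ ((p.2:ℕ) = 0)) :
    ∃ g : ↥(net n) →ₗ[ℝ] Matrix (Idx n') (Idx n') ℝ,
      Function.Injective g ∧
      (∀ M : Matrix (Idx n') (Idx n') ℝ, M ∈ net n' ↔ ∃ x, g x = M) ∧
      (∀ x y z : ↥(net n),
        (z : Matrix (Idx n) (Idx n) ℝ)
            = (x : Matrix (Idx n) (Idx n) ℝ) * y - (y : Matrix (Idx n) (Idx n) ℝ) * x →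
          g z = g x * g y - g y * g x) := by
  set R := Matrix.reindexLinearEquiv ℝ ℝ e e with hR
  set T := (Matrix.transposeLinearEquiv (Idx n) (Idx n) ℝ ℝ).trans (LinearEquiv.neg ℝ) with hT
  have hTapp : ∀ A : Matrix (Idx n) (Idx n) ℝ, T A = - Aᵀ := fun A => rfl
  have hTmul : ∀ A B : Matrix (Idx n) (Idx n) ℝ,
      T (A * B - B * A) = T A * T B - T B * T A := by
    intro A B
    simp only [hTapp, Matrix.transpose_sub, Matrix.transpose_mul, neg_sub, neg_mul_neg]
  refine master n n' ((conjE n hn).trans (T.trans (R.trans (conjE n' hn').symm))) ?_ ?_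
  · intro A B
    simp only [LinearEquiv.trans_apply]
    rw [conjE_bracket, hTmul, map_sub, ← Matrix.reindexLinearEquiv_mul ℝ ℝ e e e,
      ← Matrix.reindexLinearEquiv_mul ℝ ℝ e e e, map_sub, conjE_symm_mul, conjE_symm_mul]
  · intro M
    rw [net_iff n hn M, net_iff n' hn']
    have hRe : conjE n' hn' (((conjE n hn).trans (T.trans (R.trans (conjE n' hn').symm))) M)
        = R (T (conjE n hn M)) := by
      simp only [LinearEquiv.trans_apply, LinearEquiv.apply_symm_apply]
    rw [conjE_apply n' hn'] at hRe
    have hEntry : ∀ p' q', R (T (conjE n hn M)) p' q'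
        = - (conjE n hn M) (e.symm q') (e.symm p') := by
      intro p' q'
      simp [hR, hTapp, Matrix.reindexLinearEquiv_apply, Matrix.reindex_apply,
        Matrix.transpose_apply]
    constructor
    · intro h p' q' hp hq
      rw [hRe, hEntry, conjE_apply]
      rw [h _ _ ?_ ?_, neg_zero]
      · have := hE (e.symm q'); rw [Equiv.apply_symm_apply] at this; exact this.mp hq
      · have := hE (e.symm p'); rw [Equiv.apply_symm_apply] at this
        intro h0
        rw [← this] at h0
        exact h0 hp
    · intro h p q hp hq
      have h2 := h (e q) (e p) (not_not.mp (fun h0 => hq ((hE q).mp h0)))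
        (fun h0 => ((hE p).mpr hp) h0)
      rw [hRe, hEntry, conjE_apply, Equiv.symm_apply_apply, Equiv.symm_apply_apply,
        neg_eq_zero] at h2
      exact h2

end Core8
/-- If two color data have the same total `N` and the same `min(C, N - C)`, the network
Lie algebras are isomorphic: there is an injective linear map from `net_{C,N}` onto
`net_{C',N}` preserving the commutator bracket. -/
theorem stmt16 {C C' : ℕ} (hC : 0 < C) (hC' : 0 < C')
    (n : Fin C → ℕ) (n' : Fin C' → ℕ) (hn : ∀ c, 0 < n c) (hn' : ∀ c, 0 < n' c)
    (hN : ∑ c, n c = ∑ c, n' c)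
    (hmin : min C ((∑ c, n c) - C) = min C' ((∑ c, n' c) - C')) :
    ∃ g : ↥(net n) →ₗ[ℝ] Matrix (Idx n') (Idx n') ℝ,
      Function.Injective g ∧
      (∀ M : Matrix (Idx n') (Idx n') ℝ, M ∈ net n' ↔ ∃ x, g x = M) ∧
      (∀ x y z : ↥(net n),
        (z : Matrix (Idx n) (Idx n) ℝ)
            = (x : Matrix (Idx n) (Idx n) ℝ) * y - (y : Matrix (Idx n) (Idx n) ℝ) * x →
          g z = g x * g y - g y * g x) := by
  have hCN : C ≤ ∑ c, n c := by
    calc C = ∑ _c : Fin C, 1 := by simp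
    _ ≤ ∑ c, n c := Finset.sum_le_sum fun c _ => hn c
  have hC'N : C' ≤ ∑ c, n' c := by
    calc C' = ∑ _c : Fin C', 1 := by simp
    _ ≤ ∑ c, n' c := Finset.sum_le_sum fun c _ => hn' c
  have hcase : C = C' ∨ (C = (∑ c, n' c) - C' ∧ (∑ c, n c) - C = C') := by omega
  rcases hcase with hcc | ⟨h1, h2⟩
  · have e₁ : {p : Idx n // (p.2:ℕ) = 0} ≃ {p : Idx n' // (p.2:ℕ) = 0} :=
      Fintype.equivOfCardEq (by rw [card_color n hn, card_color n' hn', hcc])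
    have e₂ : {p : Idx n // ¬ ((p.2:ℕ) = 0)} ≃ {p : Idx n' // ¬ ((p.2:ℕ) = 0)} :=
      Fintype.equivOfCardEq (by rw [card_cocolor n hn, card_cocolor n' hn', hN, hcc])
    obtain ⟨e, hE⟩ := mkE (fun p : Idx n => (p.2:ℕ) = 0) (fun p : Idx n' => (p.2:ℕ) = 0) e₁ e₂
    exact case_same n hn n' hn' e hE
  · have e₁ : {p : Idx n // (p.2:ℕ) = 0} ≃ {p : Idx n' // ¬ ((p.2:ℕ) = 0)} :=
      Fintype.equivOfCardEq (by rw [card_color n hn, card_cocolor n' hn']; exact h1)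
    have e₂ : {p : Idx n // ¬ ((p.2:ℕ) = 0)} ≃ {p : Idx n' // ¬ ¬ ((p.2:ℕ) = 0)} :=
      (Fintype.equivOfCardEq (by rw [card_cocolor n hn, card_color n' hn']; exact h2)).trans
        (Equiv.subtypeEquivRight fun p => not_not.symm)
    obtain ⟨e, hE⟩ :=
      mkE (fun p : Idx n => (p.2:ℕ) = 0) (fun p : Idx n' => ¬ ((p.2:ℕ) = 0)) e₁ e₂
    exact case_swap n hn n' hn' e hE
end
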